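/- arXiv:2109.13888 — 2 statements merged into one kernel-verified Lean document; each statement's English description precedes it below -/
import Mathlib

section
/- Let σ ∈ S₄ be the permutation with σ(1)=4, σ(2)=3, σ(3)=1, σ(4)=2 (complete notation [4312]). A matrix L ∈ Lo¹₄ with entries L₂₁ = x, L₃₁ = u, L₃₂ = y, L₄₁ = w, L₄₂ = v, L₄₃ = z belongs to the Bruhat cell Bru_σ^GL (equivalently, L ∈ BL_σ) if and only if w = 0, u ≠ 0, v ≠ 0, and xyz − xv − uz ≠ 0. -/
open Matrix

/-- The group `Lo¹_m` of real lower triangular `m × m` matrices with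
all diagonal entries equal to `1`, viewed as a subset of the matrix space. -/
def Lo1 (m : ℕ) : Set (Matrix (Fin m) (Fin m) ℝ) :=
  {L | (∀ i, L i i = 1) ∧ ∀ i j : Fin m, i < j → L i j = 0}

/-- The set of invertible real upper triangular `m × m` matrices. -/
def UpInv (m : ℕ) : Set (Matrix (Fin m) (Fin m) ℝ) :=
  {U | (∀ i j : Fin m, j < i → U i j = 0) ∧ IsUnit U.det}

/-- The permutation matrix of `σ`, with `(P_σ)_{i, σ(i)} = 1` and `0` otherwise. -/
def permMat (m : ℕ) (σ : Equiv.Perm (Fin m)) : Matrix (Fin m) (Fin m) ℝ :=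
  fun i j => if σ i = j then 1 else 0

/-- The Bruhat cell `Bru_σ^GL = { U₀ P_σ U₁ : U₀, U₁ upper triangular invertible }`. -/
def Bru (m : ℕ) (σ : Equiv.Perm (Fin m)) : Set (Matrix (Fin m) (Fin m) ℝ) :=
  {M | ∃ U₀ ∈ UpInv m, ∃ U₁ ∈ UpInv m, M = U₀ * permMat m σ * U₁}

/-- `BL_σ = Lo¹ ∩ Bru_σ^GL`. -/
def BL (m : ℕ) (σ : Equiv.Perm (Fin m)) : Set (Matrix (Fin m) (Fin m) ℝ) :=
  Lo1 m ∩ Bru m σ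

/-- The permutation `[4312] ∈ S₄` (in `1`-indexed complete notation), i.e.
`σ(1) = 4, σ(2) = 3, σ(3) = 1, σ(4) = 2`, written `0`-indexed on `Fin 4`. -/
def σ4312 : Equiv.Perm (Fin 4) :=
  ⟨![3, 2, 0, 1], ![2, 3, 1, 0], by decide, by decide⟩

/-!
If `L = U₀ P_σ U₁` with `U₀, U₁` upper triangular, deleting the first row and the last column
commutes with the two triangular factors, so the south-west `3 × 3` minor of `L`, which is
`xyz − xv − uz + w`, is a nonzero multiple of the corresponding minor of `P_σ`, which is `1`.
The conditions on `w`, `u`, `v` are read off from single entries of `U₀ P_σ U₁`. Conversely,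
when the four conditions hold, `L` factors explicitly.
-/

variable {m : ℕ} {R : Type*}

theorem mem_UpInv_iff {U : Matrix (Fin m) (Fin m) ℝ} :
    U ∈ UpInv m ↔ U.IsUpperTriangular ∧ ∀ i, U i i ≠ 0 := by
  show U.IsUpperTriangular ∧ IsUnit U.det ↔ _
  refine and_congr_right fun hU => ?_
  rw [isUnit_iff_ne_zero, det_of_isUpperTriangular hU, Finset.prod_ne_zero_iff]
  simp

theorem permMat_mul_apply (σ : Equiv.Perm (Fin m)) (A B : Matrix (Fin m) (Fin m) ℝ)
    (i j : Fin m) :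
    (A * permMat m σ * B) i j = ∑ k, A i k * B (σ k) j := by
  rw [mul_apply, ← Equiv.sum_comp σ]
  simp [mul_apply, permMat, σ.injective.eq_iff]

theorem submatrix_succ_castSucc_mul_mul [NonUnitalNonAssocSemiring R]
    {A B : Matrix (Fin (m + 1)) (Fin (m + 1)) R} (hA : A.IsUpperTriangular)
    (hB : B.IsUpperTriangular) (M : Matrix (Fin (m + 1)) (Fin (m + 1)) R) :
    (A * M * B).submatrix Fin.succ Fin.castSucc =
      A.submatrix Fin.succ Fin.succ * M.submatrix Fin.succ Fin.castSucc *
        B.submatrix Fin.castSucc Fin.castSucc := by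
  ext i j
  have hB_last : B (Fin.last m) j.castSucc = 0 := hB (Fin.castSucc_lt_last j)
  have hA_zero : A i.succ 0 = 0 := hA (Fin.succ_pos i)
  simp only [submatrix_apply, mul_apply]
  rw [Fin.sum_univ_castSucc, hB_last, mul_zero, add_zero]
  refine Finset.sum_congr rfl fun k _ => ?_
  rw [Fin.sum_univ_succ, hA_zero, zero_mul, zero_add]

theorem Matrix.IsUpperTriangular.submatrix_succ [Zero R]
    {A : Matrix (Fin (m + 1)) (Fin (m + 1)) R} (hA : A.IsUpperTriangular) :
    (A.submatrix Fin.succ Fin.succ).IsUpperTriangular :=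
  fun _ _ h => hA (Fin.succ_lt_succ_iff.mpr h)

theorem Matrix.IsUpperTriangular.submatrix_castSucc [Zero R]
    {A : Matrix (Fin (m + 1)) (Fin (m + 1)) R} (hA : A.IsUpperTriangular) :
    (A.submatrix Fin.castSucc Fin.castSucc).IsUpperTriangular :=
  fun _ _ h => hA (Fin.castSucc_lt_castSucc_iff.mpr h)

theorem det_submatrix_succ_castSucc_ne_zero_of_mem_Bru {σ : Equiv.Perm (Fin (m + 1))}
    {L : Matrix (Fin (m + 1)) (Fin (m + 1)) ℝ} (hL : L ∈ Bru (m + 1) σ)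
    (hσ : ((permMat (m + 1) σ).submatrix Fin.succ Fin.castSucc).det ≠ 0) :
    (L.submatrix Fin.succ Fin.castSucc).det ≠ 0 := by
  obtain ⟨A, hA, B, hB, rfl⟩ := hL
  obtain ⟨hA, hAd⟩ := mem_UpInv_iff.1 hA
  obtain ⟨hB, hBd⟩ := mem_UpInv_iff.1 hB
  rw [submatrix_succ_castSucc_mul_mul hA hB, det_mul, det_mul,
    det_of_isUpperTriangular (IsUpperTriangular.submatrix_succ hA),
    det_of_isUpperTriangular (IsUpperTriangular.submatrix_castSucc hB)]
  refine mul_ne_zero (mul_ne_zero ?_ hσ) ?_ <;>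
    exact Finset.prod_ne_zero_iff.mpr fun i _ => by simp [hAd, hBd]

theorem permMat_σ4312 : permMat 4 σ4312 = !![0, 0, 0, 1; 0, 0, 1, 0; 1, 0, 0, 0; 0, 1, 0, 0] := by
  ext i j
  fin_cases i <;> fin_cases j <;> simp [permMat, σ4312]

theorem det_submatrix_succ_castSucc_permMat_σ4312 :
    ((permMat 4 σ4312).submatrix Fin.succ Fin.castSucc).det = 1 := by
  rw [permMat_σ4312, det_fin_three]
  simp

theorem eq_of_mem_Lo1_four {L : Matrix (Fin 4) (Fin 4) ℝ} (hL : L ∈ Lo1 4) :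
    L = !![1, 0, 0, 0; L 1 0, 1, 0, 0; L 2 0, L 2 1, 1, 0; L 3 0, L 3 1, L 3 2, 1] := by
  obtain ⟨hdiag, hupper⟩ := hL
  ext i j
  fin_cases i <;> fin_cases j <;> simp [hdiag, hupper]

theorem entries_of_mem_Bru_σ4312 {L : Matrix (Fin 4) (Fin 4) ℝ} (hL : L ∈ Bru 4 σ4312) :
    L 3 0 = 0 ∧ L 2 0 ≠ 0 ∧ L 3 1 ≠ 0 := by
  obtain ⟨A, hA, B, hB, rfl⟩ := hL
  obtain ⟨hA, hAd⟩ := mem_UpInv_iff.1 hA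
  obtain ⟨hB, hBd⟩ := mem_UpInv_iff.1 hB
  have hA' : ∀ i j : Fin 4, j < i → A i j = 0 := fun _ _ h => hA h
  have hB' : ∀ i j : Fin 4, j < i → B i j = 0 := fun _ _ h => hB h
  simp [permMat_mul_apply, Fin.sum_univ_four, σ4312, hA', hB', hAd, hBd]

theorem det_submatrix_succ_castSucc_of_mem_Lo1_four {L : Matrix (Fin 4) (Fin 4) ℝ}
    (hL : L ∈ Lo1 4) :
    (L.submatrix Fin.succ Fin.castSucc).det =
      L 1 0 * L 2 1 * L 3 2 - L 1 0 * L 3 1 - L 2 0 * L 3 2 + L 3 0 := by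
  rw [eq_of_mem_Lo1_four hL, det_fin_three]
  simp

-- Rows `2` and `3` of `U₀ P_σ U₁` are rows `0` and `1` of `U₁`; the rest solves rows `0`, `1`.
theorem unitriangular_mem_Bru_σ4312 {x u y v z : ℝ} (hu : u ≠ 0) (hv : v ≠ 0)
    (hD : x * y * z - x * v - u * z ≠ 0) :
    !![1, 0, 0, 0; x, 1, 0, 0; u, y, 1, 0; 0, v, z, 1] ∈ Bru 4 σ4312 := by
  set D := x * y * z - x * v - u * z
  refine ⟨!![1, (y * z - v) / D, 1 / u, -y / (u * v);
             0, 1, x / u, (u - x * y) / (u * v);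
             0, 0, 1, 0;
             0, 0, 0, 1], mem_UpInv_iff.2 ⟨?_, ?_⟩,
          !![u, y, 1, 0;
             0, v, z, 1;
             0, 0, D / (u * v), (x * y - u) / (u * v);
             0, 0, 0, -1 / D], mem_UpInv_iff.2 ⟨?_, ?_⟩, ?_⟩
  · intro i j h
    fin_cases i <;> fin_cases j <;> first | rfl | exact absurd h (by decide)
  · intro i
    fin_cases i <;> simp
  · intro i j h
    fin_cases i <;> fin_cases j <;> first | rfl | exact absurd h (by decide)
  · intro i
    fin_cases i <;> simp [hu, hv, hD]
  · rw [permMat_σ4312]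
    ext i j
    fin_cases i <;> fin_cases j <;> simp [mul_apply, Fin.sum_univ_four] <;> field_simp <;> ring

/-- a unipotent lower triangular matrix `L` (with
`x = L₂₁, u = L₃₁, y = L₃₂, w = L₄₁, v = L₄₂, z = L₄₃`, here `0`-indexed)
lies in the Bruhat cell of `[4312]` iff
`w = 0`, `u ≠ 0`, `v ≠ 0` and `xyz − xv − uz ≠ 0`. -/
theorem stmt0 (L : Matrix (Fin 4) (Fin 4) ℝ) (hL : L ∈ Lo1 4) :
    L ∈ Bru 4 σ4312 ↔
      L 3 0 = 0 ∧ L 2 0 ≠ 0 ∧ L 3 1 ≠ 0 ∧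
        L 1 0 * L 2 1 * L 3 2 - L 1 0 * L 3 1 - L 2 0 * L 3 2 ≠ 0 := by
  constructor
  · intro hBru
    obtain ⟨hw, hu, hv⟩ := entries_of_mem_Bru_σ4312 hBru
    have hminor := det_submatrix_succ_castSucc_ne_zero_of_mem_Bru hBru
      (det_submatrix_succ_castSucc_permMat_σ4312 ▸ one_ne_zero)
    rw [det_submatrix_succ_castSucc_of_mem_Lo1_four hL, hw, add_zero] at hminor
    exact ⟨hw, hu, hv, hminor⟩
  · rintro ⟨hw, hu, hv, hD⟩
    rw [eq_of_mem_Lo1_four hL, hw]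
    exact unitriangular_mem_Bru_σ4312 hu hv hD
end

section
/- Let Q be an (n+1)×(n+1) real signed permutation matrix, i.e., Q has exactly one nonzero entry in each row and each column, and each nonzero entry equals +1 or −1; let σ ∈ S_{n+1} be its underlying permutation and let c be the number of cycles of σ (fixed points counted as cycles). Then the orbit of Q under conjugation by the group of diagonal matrices with diagonal entries in {+1, −1}, namely {D Q D⁻¹ : D diagonal with entries ±1}, has exactly 2^{n+1−c} elements. -/
/-!
Write `D_u = diagonal u` for `u : ι → {±1}`. Since `Q` is supported on the graph of `σ`,
`D_u Q D_u⁻¹ = D_w Q` with `w i = u i * u (σ i)`, and `w ↦ D_w Q` is injective because every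
row of `Q` has a nonzero entry. So the orbit is in bijection with the image of the homomorphism
`u ↦ u * (u ∘ σ)` on `{±1}^{n+1}`. Its kernel consists of the `u` constant on the cycles of `σ`,
so it has `2^c` elements and the image has `2^{n+1} / 2^c`.
-/

open Matrix

namespace Equiv.Perm

variable {ι : Type*} (σ : Perm ι)

def signCoboundary : (ι → ℤˣ) →* (ι → ℤˣ) where
  toFun u := u * (u ∘ σ)
  map_one' := rfl
  map_mul' u v := by ext i; simp [mul_mul_mul_comm]

lemma signCoboundary_apply (u : ι → ℤˣ) (i : ι) : σ.signCoboundary u i = u i * u (σ i) := rfl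

lemma mem_ker_signCoboundary_iff {u : ι → ℤˣ} : u ∈ σ.signCoboundary.ker ↔ u ∘ σ = u := by
  rw [MonoidHom.mem_ker, funext_iff, funext_iff]
  refine forall_congr' fun i => ?_
  rw [signCoboundary_apply, Pi.one_apply, mul_eq_one_iff_inv_eq, Int.units_inv_eq_self,
    Function.comp_apply, eq_comm]

lemma comp_zpow_eq_of_comp_eq {β : Type*} {u : ι → β} (h : u ∘ σ = u) (k : ℤ) :
    u ∘ ⇑(σ ^ k) = u := by
  have h_inv : u ∘ ⇑σ⁻¹ = u := by
    calc u ∘ ⇑σ⁻¹ = (u ∘ σ) ∘ ⇑σ⁻¹ := by rw [h]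
      _ = u := by ext; simp
  induction k using Int.induction_on with
  | zero => rfl
  | succ k ih => rw [_root_.zpow_add_one, coe_mul, ← Function.comp_assoc, ih, h]
  | pred k ih => rw [_root_.zpow_sub_one, coe_mul, ← Function.comp_assoc, ih, h_inv]

def invariantFunEquiv (β : Type*) :
    {u : ι → β // u ∘ σ = u} ≃ (Quotient (MulAction.orbitRel (Subgroup.zpowers σ) ι) → β) where
  toFun u := Quotient.lift u.1 <| by
    rintro _ y ⟨⟨_, k, rfl⟩, rfl⟩
    exact congrFun (comp_zpow_eq_of_comp_eq σ u.2 k) y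
  invFun f := ⟨f ∘ Quotient.mk _,
    funext fun i => congrArg f (Quotient.sound ⟨⟨σ, Subgroup.mem_zpowers σ⟩, rfl⟩)⟩
  left_inv _ := rfl
  right_inv f := funext (Quotient.ind fun _ => rfl)

lemma card_ker_signCoboundary [Finite ι] :
    Nat.card σ.signCoboundary.ker =
      2 ^ Nat.card (Quotient (MulAction.orbitRel (Subgroup.zpowers σ) ι)) := by
  rw [Nat.card_congr ((Equiv.subtypeEquivRight fun _ => σ.mem_ker_signCoboundary_iff).trans
    (σ.invariantFunEquiv ℤˣ)), Nat.card_fun, Nat.card_eq_fintype_card, Fintype.card_units_int]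

lemma card_range_signCoboundary [Finite ι] :
    Nat.card σ.signCoboundary.range =
      2 ^ (Nat.card ι - Nat.card (Quotient (MulAction.orbitRel (Subgroup.zpowers σ) ι))) := by
  have hmul := σ.signCoboundary.ker.card_mul_index
  rw [Subgroup.index_ker, card_ker_signCoboundary, Nat.card_fun,
    Nat.card_eq_fintype_card (α := ℤˣ), Fintype.card_units_int] at hmul
  have hle := Nat.card_le_card_of_surjective _ (Quotient.mk_surjective
    (s := MulAction.orbitRel (Subgroup.zpowers σ) ι))
  rw [← Nat.sub_add_cancel hle, pow_add, mul_comm] at hmul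
  exact Nat.eq_of_mul_eq_mul_right (by positivity) hmul

end Equiv.Perm

lemma range_pi_intCast_units {ι R : Type*} [Ring R] :
    Set.range (fun (u : ι → ℤˣ) i => ((u i : ℤ) : R)) = {ε | ∀ i, ε i = 1 ∨ ε i = -1} := by
  ext ε
  constructor
  · rintro ⟨u, rfl⟩ i
    rcases Int.units_eq_one_or (u i) with h | h <;> simp [h]
  · intro h
    have (i : ι) : ∃ v : ℤˣ, ((v : ℤ) : R) = ε i :=
      (h i).elim (fun h => ⟨1, by simp [h]⟩) (fun h => ⟨-1, by simp [h]⟩)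
    choose u hu using this
    exact ⟨u, funext hu⟩

namespace Matrix

variable {ι R : Type*} [Fintype ι] [DecidableEq ι] [CommRing R]

lemma diagonal_units_int_mul_self (u : ι → ℤˣ) :
    diagonal (fun i => ((u i : ℤ) : R)) * diagonal (fun i => ((u i : ℤ) : R)) = 1 := by
  rw [diagonal_mul_diagonal, ← diagonal_one]
  congr with i
  rw [← Int.cast_mul, ← Units.val_mul, Int.units_mul_self, Units.val_one, Int.cast_one]

lemma conj_diagonal_units_int_of_support (σ : Equiv.Perm ι) {Q : Matrix ι ι R}
    (hQ : ∀ i j, j ≠ σ i → Q i j = 0) (u : ι → ℤˣ) :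
    diagonal (fun i => ((u i : ℤ) : R)) * Q * (diagonal fun i => ((u i : ℤ) : R))⁻¹ =
      diagonal (fun i => ((σ.signCoboundary u i : ℤ) : R)) * Q := by
  rw [inv_eq_left_inv (diagonal_units_int_mul_self u)]
  ext i j
  rw [mul_diagonal, diagonal_mul, diagonal_mul]
  by_cases hj : j = σ i
  · subst hj
    simp only [Equiv.Perm.signCoboundary_apply, Units.val_mul, Int.cast_mul]
    ring
  · simp [hQ i j hj]

lemma diagonal_units_int_mul_injective [IsDomain R] [CharZero R] {Q : Matrix ι ι R}
    (hQ : ∀ i, ∃ j, Q i j ≠ 0) :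
    Function.Injective fun w : ι → ℤˣ => diagonal (fun i => ((w i : ℤ) : R)) * Q := by
  intro w w' h
  funext i
  obtain ⟨j, hj⟩ := hQ i
  have := congrFun (congrFun h i) j
  simp only [diagonal_mul] at this
  exact Units.val_injective (Int.cast_injective (mul_right_cancel₀ hj this))

lemma diagonal_sign_conj_eq_image_range_signCoboundary (σ : Equiv.Perm ι)
    {Q : Matrix ι ι R} (hQ : ∀ i j, j ≠ σ i → Q i j = 0) :
    {M : Matrix ι ι R | ∃ ε : ι → R, (∀ i, ε i = 1 ∨ ε i = -1) ∧
        M = diagonal ε * Q * (diagonal ε)⁻¹} =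
      (fun w : ι → ℤˣ => diagonal (fun i => ((w i : ℤ) : R)) * Q) '' σ.signCoboundary.range := by
  calc _ = (fun ε => diagonal ε * Q * (diagonal ε)⁻¹) '' {ε | ∀ i, ε i = 1 ∨ ε i = -1} := by
        ext; simp [eq_comm]
    _ = Set.range (fun u : ι → ℤˣ =>
          diagonal (fun i => ((u i : ℤ) : R)) * Q * (diagonal fun i => ((u i : ℤ) : R))⁻¹) := by
        rw [← range_pi_intCast_units, ← Set.range_comp]
        rfl
    _ = _ := by
        rw [MonoidHom.coe_range, ← Set.range_comp]
        exact congrArg Set.range (funext (conj_diagonal_units_int_of_support σ hQ))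

end Matrix

/-- let `Q` be a real signed permutation matrix over
`σ ∈ S_{n+1}` (i.e. `Q i (σ i) ∈ {+1, −1}` and all other entries vanish), and
let `c` be the number of cycles of `σ` (fixed points included, i.e. the number
of orbits of `⟨σ⟩` on `{1,…,n+1}`).  Then the orbit
`{D Q D⁻¹ : D diagonal with entries ±1}` of `Q` under conjugation by the group
of `±1` diagonal matrices has exactly `2^{n+1−c}` elements. -/
theorem stmt11 (n : ℕ) (σ : Equiv.Perm (Fin (n + 1)))
    (Q : Matrix (Fin (n + 1)) (Fin (n + 1)) ℝ)
    (hQ : ∀ i j : Fin (n + 1),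
      (j = σ i → Q i j = 1 ∨ Q i j = -1) ∧ (j ≠ σ i → Q i j = 0))
    (c : ℕ)
    (hc : c = Nat.card
      (Quotient (MulAction.orbitRel (Subgroup.zpowers σ) (Fin (n + 1))))) :
    Nat.card {M : Matrix (Fin (n + 1)) (Fin (n + 1)) ℝ |
        ∃ ε : Fin (n + 1) → ℝ, (∀ i, ε i = 1 ∨ ε i = -1) ∧
          M = Matrix.diagonal ε * Q * (Matrix.diagonal ε)⁻¹} =
      2 ^ (n + 1 - c) := by
  have hrow (i : Fin (n + 1)) : ∃ j, Q i j ≠ 0 :=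
    ⟨σ i, by rcases (hQ i (σ i)).1 rfl with h | h <;> simp [h]⟩
  rw [diagonal_sign_conj_eq_image_range_signCoboundary σ fun i j => (hQ i j).2,
    Nat.card_image_of_injective (diagonal_units_int_mul_injective hrow), SetLike.coe_sort_coe,
    σ.card_range_signCoboundary, Nat.card_fin, hc]
end
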